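/- Label filtering (top-down): Let N be a network model, let u and v be two nodes in the same layer L_j, and write W_x := {w(q) : q a directed path from x to t in N} for a node x, and L↓(x) := ND({w(q) : q a directed path from r to x in N}). Suppose ND(ND(W_u) ∪ ND(W_v)) = ND(W_v), and suppose there are labels ℓ^u ∈ L↓(u) and ℓ^v ∈ L↓(v) with ℓ^v ≻ ℓ^u or ℓ^v = ℓ^u. Then for every directed path p from u to t in N, the vector ℓ^u + w(p) is dominated by ℓ^v + w(p') for some directed path p' from v to t; consequently ND(⋃_{x ∈ L_j} {ℓ + w(q) : ℓ ∈ L↓(x), q a directed path from x to t}) = ND(⋃_{x ∈ L_j} {ℓ + w(q) : ℓ ∈ L'(x), q a directed path from x to t}), where L'(x) = L↓(x) for x ≠ u and L'(u) = L↓(u) \ {ℓ^u}; i.e., removing the label ℓ^u does not change the Pareto frontier P(N). -/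

import Mathlib

/-!
Since `ND(ND W_u ∪ ND W_v) = ND W_v` and these sets are finite, every `u`–`t` weight lies below
some `v`–`t` weight; adding `ℓu ≤ ℓv` shows that each `ℓu + w(p)` lies below some `ℓv + w(p')`.
The latter survives the removal of `ℓu`, and removing a set of points each of which lies below a
remaining point does not change the nondominated set.
-/

open Pointwise

/-- `y` dominates `y'`: componentwise at least as large and not equal. -/
def dominates {K : ℕ} (y y' : Fin K → ℝ) : Prop :=
  (∀ k, y' k ≤ y k) ∧ y ≠ y'

/-- The nondominated subset of `S`. -/
def ND {K : ℕ} (S : Set (Fin K → ℝ)) : Set (Fin K → ℝ) :=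
  {y ∈ S | ¬ ∃ y' ∈ S, dominates y' y}

/-- `IsPath tl hd p u v`: the list of arcs `p` forms a directed walk from `u` to `v`. -/
def IsPath {V A : Type*} (tl hd : A → V) : List A → V → V → Prop
  | [], u, v => u = v
  | a :: p, u, v => tl a = u ∧ IsPath tl hd p (hd a) v

/-- Total weight of a list of arcs. -/
def pathWeight {A : Type*} {K : ℕ} (w : A → Fin K → ℝ) (p : List A) : Fin K → ℝ :=
  (p.map w).sum

/-- A layered-acyclic network model with `n + 1` layers (indexed `1, …, n+1`),
a single root in layer `1`, a single terminal in layer `n+1`, every arc going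
from one layer to the next, and `K`-dimensional arc weights. -/
structure Network (V A : Type*) (K : ℕ) where
  tl : A → V
  hd : A → V
  w : A → Fin K → ℝ
  n : ℕ
  layer : V → ℕ
  layer_pos : ∀ v, 1 ≤ layer v
  layer_le : ∀ v, layer v ≤ n + 1
  arc_step : ∀ a, layer (hd a) = layer (tl a) + 1
  root : V
  terminal : V
  root_layer : layer root = 1
  terminal_layer : layer terminal = n + 1
  root_unique : ∀ v, layer v = 1 → v = root
  terminal_unique : ∀ v, layer v = n + 1 → v = terminal
  layer_nonempty : ∀ j, 1 ≤ j → j ≤ n + 1 → ∃ v, layer v = j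

namespace Network

variable {V A : Type*} {K : ℕ}

/-- The set of directed paths from `u` to `v`. -/
def Paths (N : Network V A K) (u v : V) : Set (List A) :=
  {p | IsPath N.tl N.hd p u v}

/-- The set of weights of directed paths from `u` to `v`. -/
def weights (N : Network V A K) (u v : V) : Set (Fin K → ℝ) :=
  pathWeight N.w '' N.Paths u v

/-- The Pareto frontier of the network. -/
def Pareto (N : Network V A K) : Set (Fin K → ℝ) :=
  ND (N.weights N.root N.terminal)

end Network

section Dominance

variable {K : ℕ}

theorem dominates_iff_lt {y y' : Fin K → ℝ} : dominates y y' ↔ y' < y := by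
  rw [dominates, lt_iff_le_and_ne, ne_comm]
  rfl

theorem dominates_or_eq_iff_le {y y' : Fin K → ℝ} : dominates y y' ∨ y = y' ↔ y' ≤ y := by
  rw [dominates_iff_lt, eq_comm, or_comm]
  exact le_iff_eq_or_lt.symm

theorem ND_subset (S : Set (Fin K → ℝ)) : ND S ⊆ S := fun _ hy => hy.1

theorem Set.Finite.exists_mem_ND_ge {S : Set (Fin K → ℝ)} (hS : S.Finite) {y : Fin K → ℝ}
    (hy : y ∈ S) : ∃ z ∈ ND S, y ≤ z := by
  obtain ⟨z, ⟨hzS, hyz⟩, hmax⟩ :=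
    (hS.inter_of_left {z | y ≤ z}).exists_maximalFor id _ ⟨y, hy, le_refl y⟩
  refine ⟨z, ⟨hzS, ?_⟩, hyz⟩
  rintro ⟨z', hz'S, hz'z⟩
  rw [dominates_iff_lt] at hz'z
  exact hz'z.not_ge (hmax ⟨hz'S, hyz.trans hz'z.le⟩ hz'z.le)

theorem ND_eq_of_subset_of_forall_exists_ge {S S' : Set (Fin K → ℝ)} (hsub : S' ⊆ S)
    (hcof : ∀ y ∈ S, ∃ z ∈ S', y ≤ z) : ND S = ND S' := by
  ext y
  constructor
  · rintro ⟨hyS, hnd⟩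
    obtain ⟨z, hzS', hyz⟩ := hcof y hyS
    obtain rfl : z = y := by
      by_contra hzy
      exact hnd ⟨z, hsub hzS', dominates_iff_lt.2 (hyz.lt_of_ne (Ne.symm hzy))⟩
    exact ⟨hzS', fun ⟨z', hz', hd⟩ => hnd ⟨z', hsub hz', hd⟩⟩
  · rintro ⟨hyS', hnd⟩
    refine ⟨hsub hyS', ?_⟩
    rintro ⟨z, hzS, hzy⟩
    obtain ⟨z', hz'S', hzz'⟩ := hcof z hzS
    exact hnd ⟨z', hz'S', dominates_iff_lt.2 ((dominates_iff_lt.1 hzy).trans_le hzz')⟩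

theorem exists_mem_ND_ge_of_ND_union_eq {S T : Set (Fin K → ℝ)} (hS : S.Finite)
    (hT : T.Finite) (hST : ND (ND S ∪ ND T) = ND T) {y : Fin K → ℝ} (hy : y ∈ S) :
    ∃ z ∈ ND T, y ≤ z := by
  obtain ⟨z₁, hz₁, hyz₁⟩ := hS.exists_mem_ND_ge hy
  have hfin : (ND S ∪ ND T).Finite :=
    (hS.subset (ND_subset S)).union (hT.subset (ND_subset T))
  obtain ⟨z, hz, hz₁z⟩ := hfin.exists_mem_ND_ge (Or.inl hz₁)
  exact ⟨z, hST ▸ hz, hyz₁.trans hz₁z⟩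

theorem ND_biUnion_add_eq_of_forall_exists_ge {ι : Type*} [DecidableEq ι] {s : Set ι}
    {L W : ι → Set (Fin K → ℝ)} {u v : ι} (hv : v ∈ s) (hvu : v ≠ u) {ℓu ℓv : Fin K → ℝ}
    (hℓv : ℓv ∈ L v) (hle : ∀ c ∈ W u, ∃ c' ∈ W v, ℓu + c ≤ ℓv + c') :
    ND (⋃ x ∈ s, L x + W x) =
      ND (⋃ x ∈ s, (if x = u then L u \ {ℓu} else L x) + W x) := by
  apply ND_eq_of_subset_of_forall_exists_ge
  · refine Set.iUnion₂_mono fun x _ => Set.add_subset_add_right ?_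
    split_ifs with hxu
    · exact hxu ▸ Set.sdiff_subset
    · exact subset_rfl
  · simp only [Set.mem_iUnion, Set.mem_add]
    rintro _ ⟨x, hx, ℓ, hℓ, c, hc, rfl⟩
    by_cases hremoved : x = u ∧ ℓ = ℓu
    · obtain ⟨rfl, rfl⟩ := hremoved
      obtain ⟨c', hc', hcc'⟩ := hle c hc
      exact ⟨ℓv + c', ⟨v, hv, ℓv, by rwa [if_neg hvu], c', hc', rfl⟩, hcc'⟩
    · refine ⟨ℓ + c, ⟨x, hx, ℓ, ?_, c, hc, rfl⟩, le_rfl⟩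
      split_ifs with hxu
      · subst hxu
        exact ⟨hℓ, fun hℓu => hremoved ⟨rfl, hℓu⟩⟩
      · exact hℓ

end Dominance

namespace Network

variable {V A : Type*} {K : ℕ} (N : Network V A K)

theorem layer_eq_add_length_of_isPath {p : List A} {x y : V} (hp : IsPath N.tl N.hd p x y) :
    N.layer y = N.layer x + p.length := by
  induction p generalizing x with
  | nil => exact congrArg N.layer hp.symm
  | cons a p ih =>
    obtain ⟨rfl, hp⟩ := hp
    rw [ih hp, N.arc_step a, List.length_cons]
    ring

theorem weights_finite [Finite A] (x y : V) : (N.weights x y).Finite := by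
  refine Set.Finite.image _ ((List.finite_length_le A (N.layer y)).subset fun p hp => ?_)
  have := N.layer_eq_add_length_of_isPath hp
  rw [Set.mem_ofPred_eq]
  omega

theorem exists_path_add_weight_ge [Finite A] {u v : V}
    (hND : ND (ND (N.weights u N.terminal) ∪ ND (N.weights v N.terminal)) =
      ND (N.weights v N.terminal))
    {ℓu ℓv : Fin K → ℝ} (hle : ℓu ≤ ℓv) {p : List A} (hp : p ∈ N.Paths u N.terminal) :
    ∃ p' ∈ N.Paths v N.terminal, ℓu + pathWeight N.w p ≤ ℓv + pathWeight N.w p' := by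
  obtain ⟨_, hz, hpz⟩ := exists_mem_ND_ge_of_ND_union_eq (N.weights_finite u N.terminal)
    (N.weights_finite v N.terminal) hND ⟨p, hp, rfl⟩
  obtain ⟨p', hp', rfl⟩ := ND_subset _ hz
  exact ⟨p', hp', add_le_add hle hpz⟩

end Network

theorem label_filtering_top_down_general {V A : Type*} [Fintype A] [DecidableEq V]
    {K : ℕ} (N : Network V A K) (u v : V) (huv : u ≠ v)
    (hlayer : N.layer v = N.layer u)
    (hND : ND (ND (N.weights u N.terminal) ∪ ND (N.weights v N.terminal)) =
      ND (N.weights v N.terminal))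
    (ℓu ℓv : Fin K → ℝ)
    (hℓv : ℓv ∈ ND (N.weights N.root v))
    (hdom : dominates ℓv ℓu ∨ ℓv = ℓu) :
    (∀ p ∈ N.Paths u N.terminal, ∃ p' ∈ N.Paths v N.terminal,
        dominates (ℓv + pathWeight N.w p') (ℓu + pathWeight N.w p) ∨
          ℓv + pathWeight N.w p' = ℓu + pathWeight N.w p) ∧
    ND (⋃ x ∈ {x : V | N.layer x = N.layer u},
          ND (N.weights N.root x) + N.weights x N.terminal) =
      ND (⋃ x ∈ {x : V | N.layer x = N.layer u},
          (if x = u then ND (N.weights N.root u) \ {ℓu} else ND (N.weights N.root x)) +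
            N.weights x N.terminal) := by
  have hle : ℓu ≤ ℓv := dominates_or_eq_iff_le.1 hdom
  constructor
  · intro p hp
    obtain ⟨p', hp', hpp'⟩ := N.exists_path_add_weight_ge hND hle hp
    exact ⟨p', hp', dominates_or_eq_iff_le.2 hpp'⟩
  · refine ND_biUnion_add_eq_of_forall_exists_ge (by exact hlayer) huv.symm hℓv ?_
    rintro _ ⟨p, hp, rfl⟩
    obtain ⟨p', hp', hpp'⟩ := N.exists_path_add_weight_ge hND hle hp
    exact ⟨_, ⟨p', hp', rfl⟩, hpp'⟩

/-- **Label filtering (top-down).**  Let `u ≠ v` be nodes in the same layer with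
`ND(ND(W_u) ∪ ND(W_v)) = ND(W_v)`, where `W_x` is the set of weights of `x`–`t` paths,
and let `ℓu ∈ L↓(u)`, `ℓv ∈ L↓(v)` (top-down labels, i.e. the nondominated `r`–`x` path
weights) with `ℓv ≻ ℓu` or `ℓv = ℓu`.  Then every vector `ℓu + w(p)` (for `p` a `u`–`t`
path) is dominated by (or equal to) some `ℓv + w(p')` with `p'` a `v`–`t` path, and
removing the label `ℓu` from `L↓(u)` does not change the nondominated set obtained by
extending the top-down labels of the layer to the terminal, i.e. the Pareto frontier. -/
theorem label_filtering_top_down {V A : Type*} [Fintype V] [Fintype A] [DecidableEq V]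
    {K : ℕ} (N : Network V A K) (u v : V) (huv : u ≠ v)
    (hlayer : N.layer v = N.layer u)
    (hND : ND (ND (N.weights u N.terminal) ∪ ND (N.weights v N.terminal)) =
      ND (N.weights v N.terminal))
    (ℓu ℓv : Fin K → ℝ)
    (hℓu : ℓu ∈ ND (N.weights N.root u)) (hℓv : ℓv ∈ ND (N.weights N.root v))
    (hdom : dominates ℓv ℓu ∨ ℓv = ℓu) :
    (∀ p ∈ N.Paths u N.terminal, ∃ p' ∈ N.Paths v N.terminal,
        dominates (ℓv + pathWeight N.w p') (ℓu + pathWeight N.w p) ∨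
          ℓv + pathWeight N.w p' = ℓu + pathWeight N.w p) ∧
    ND (⋃ x ∈ {x : V | N.layer x = N.layer u},
          ND (N.weights N.root x) + N.weights x N.terminal) =
      ND (⋃ x ∈ {x : V | N.layer x = N.layer u},
          (if x = u then ND (N.weights N.root u) \ {ℓu} else ND (N.weights N.root x)) +
            N.weights x N.terminal) :=
  label_filtering_top_down_general N u v huv hlayer hND ℓu ℓv hℓv hdom
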